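/- (Example 1.1) Let f₁ ∈ C¹([0,∞)×ℝ;ℝ), f₂ ∈ C¹([0,∞)×ℝ²;ℝ), f₃ ∈ C¹([0,∞)×ℝ³;ℝ), and suppose there is a continuous nondecreasing C : [0,∞) → [0,∞) such that for all t ≥ 0 and x₁, x₂, x₃ ∈ ℝ: x₁·f₁(t,x₁) ≤ C(t)|x₁|², x₂·f₂(t,x₁,x₂) ≤ C(t)|x₂|², and x₃·f₃(t,x₁,x₂,x₃) ≤ C(t)|x₃|². Then the system ẋ₁ = x₂³ + f₁(t,x₁), ẋ₂ = (1+x₁²)^{−1}x₃³ + f₂(t,x₁,x₂), ẋ₃ = f₃(t,x₁,x₂,x₃) on ℝ³ is forward complete: for every t₀ ≥ 0 and x₀ ∈ ℝ³ there is a solution x(·,t₀,x₀) defined on all of [t₀,∞) with x(t₀,t₀,x₀) = x₀, and there exists a continuous β : [0,∞)×[0,∞) → [0,∞), nondecreasing in each argument, such that |x(t,t₀,x₀)| ≤ β(t,|x₀|) for all t ≥ t₀ ≥ 0 and all x₀ ∈ ℝ³. -/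

import Mathlib

open Set Metric Real

/-- Euclidean norm on `Fin k → ℝ`. -/
noncomputable def eunorm {k : ℕ} (x : Fin k → ℝ) : ℝ := Real.sqrt (∑ i, (x i) ^ 2)

section auxiliary

variable {E : Type*} [NormedAddCommGroup E] [NormedSpace ℝ E]

lemma auxSingle (f : ℝ → E) (x : ℝ) (v : E) : HasDerivWithinAt f v {x} x := by
  rw [hasDerivWithinAt_iff_tendsto_slope]
  have : ({x} : Set ℝ) \ {x} = ∅ := Set.sdiff_self
  rw [this, nhdsWithin_empty]
  exact Filter.tendsto_bot

lemma auxGBle {δ K ε τ τ' : ℝ} (hK : 0 < K) (hδ : 0 ≤ δ) (hε : 0 ≤ ε) (hτ : 0 ≤ τ)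
    (hττ' : τ ≤ τ') : gronwallBound δ K ε τ ≤ (δ + ε * τ') * Real.exp (K * τ') := by
  rw [gronwallBound_of_K_ne_0 hK.ne']
  have hτ' : 0 ≤ τ' := le_trans hτ hττ'
  have h1 : Real.exp (K * τ) ≤ Real.exp (K * τ') := by
    apply Real.exp_le_exp.2; nlinarith
  have ha : (0:ℝ) < Real.exp (K * τ') := Real.exp_pos _
  have hab : Real.exp (K * τ') * Real.exp (-(K * τ')) = 1 := by
    rw [← Real.exp_add]; simp
  have hb := Real.add_one_le_exp (-(K * τ'))
  have h2 : Real.exp (K * τ') - 1 ≤ K * τ' * Real.exp (K * τ') := by nlinarith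
  have h3 : Real.exp (K * τ) - 1 ≤ K * τ' * Real.exp (K * τ') := by linarith
  have h4 : ε / K * (Real.exp (K * τ) - 1) ≤ ε / K * (K * τ' * Real.exp (K * τ')) :=
    mul_le_mul_of_nonneg_left h3 (div_nonneg hε hK.le)
  have h5 : ε / K * (K * τ' * Real.exp (K * τ')) = ε * τ' * Real.exp (K * τ') := by
    field_simp
  have h6 : δ * Real.exp (K * τ) ≤ δ * Real.exp (K * τ') := mul_le_mul_of_nonneg_left h1 hδ
  nlinarith

lemma auxIci' {E : Type*} [NormedAddCommGroup E] [NormedSpace ℝ E]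
    {x : ℝ → E} {v : E} {a b τ : ℝ} (hτ : a ≤ τ) (hb : τ < b)
    (h : HasDerivWithinAt x v (Icc a b) τ) : HasDerivWithinAt x v (Ici τ) τ := by
  refine h.mono_of_mem_nhdsWithin ?_
  refine Filter.mem_of_superset (Filter.inter_mem self_mem_nhdsWithin
    (mem_nhdsWithin_of_mem_nhds (Iic_mem_nhds hb))) ?_
  rintro z ⟨hz1, hz2⟩
  exact ⟨le_trans hτ hz1, hz2⟩

lemma auxGron {t₀ t : ℝ} (ht₀ : 0 ≤ t₀) (ht : t₀ ≤ t) (w g : ℝ → ℝ) {K ε δ : ℝ}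
    (hK : 0 < K) (hδ : 0 ≤ δ) (hε : 0 ≤ ε)
    (hw : ∀ τ ∈ Icc t₀ t, HasDerivWithinAt w (g τ) (Icc t₀ t) τ)
    (h0 : w t₀ ≤ δ)
    (hg : ∀ τ ∈ Ico t₀ t, g τ ≤ K * w τ + ε) :
    w t ≤ (δ + ε * t) * Real.exp (K * t) := by
  have hcont : ContinuousOn w (Icc t₀ t) := fun τ hτ => (hw τ hτ).continuousWithinAt
  have key := le_gronwallBound_of_liminf_deriv_right_le (f := w) (f' := g) (δ := δ) (K := K)
    (ε := ε) (a := t₀) (b := t) hcont ?_ h0 hg t ⟨ht, le_rfl⟩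
  · refine le_trans key (auxGBle hK hδ hε (by linarith) (by linarith))
  · intro τ hτ r hr
    have hd : HasDerivWithinAt w (g τ) (Ici τ) τ :=
      auxIci' hτ.1 hτ.2 (hw τ (Ico_subset_Icc_self hτ))
    have := hd.liminf_right_slope_le hr
    refine this.mono fun z hz => ?_
    rwa [slope_def_field, div_eq_inv_mul] at hz

variable {E : Type*} [NormedAddCommGroup E] [NormedSpace ℝ E]

lemma auxLip [FiniteDimensional ℝ E] (v : ℝ → E → E)
    (hv : ContDiffOn ℝ 1 (fun p : ℝ × E => v p.1 p.2) (Ici 0 ×ˢ univ))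
    (T R : ℝ) :
    ∃ L : NNReal, ∃ M : ℝ, 0 ≤ M ∧
      (∀ t ∈ Icc (0:ℝ) T, ∀ y ∈ closedBall (0:E) R, ‖v t y‖ ≤ M) ∧
      (∀ t ∈ Icc (0:ℝ) T, LipschitzOnWith L (v t) (closedBall (0:E) R)) := by
  set T' : ℝ := max T 0 + 1 with hT'def
  set R' : ℝ := max R 0 + 1 with hR'def
  have hT' : (0:ℝ) < T' := by positivity
  have hR' : (0:ℝ) < R' := by positivity
  set Q : Set (ℝ × E) := Icc (0:ℝ) T' ×ˢ closedBall (0:E) R' with hQdef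
  have hQs : Q ⊆ Ici (0:ℝ) ×ˢ (univ : Set E) := fun p hp => ⟨hp.1.1, trivial⟩
  have hconv : Convex ℝ Q := (convex_Icc _ _).prod (convex_closedBall _ _)
  have hint : (interior Q).Nonempty := by
    refine ⟨(T'/2, 0), ?_⟩
    rw [hQdef, interior_prod_eq, interior_Icc, interior_closedBall _ hR'.ne']
    exact ⟨⟨by linarith, by linarith⟩, mem_ball_self hR'⟩
  have hu : UniqueDiffOn ℝ Q := uniqueDiffOn_convex hconv hint
  have hG : ContDiffOn ℝ 1 (fun p : ℝ × E => v p.1 p.2) Q := hv.mono hQs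
  have hcomp : IsCompact Q := isCompact_Icc.prod (isCompact_closedBall _ _)
  have hd : DifferentiableOn ℝ (fun p : ℝ × E => v p.1 p.2) Q := hG.differentiableOn one_ne_zero
  have hc' : ContinuousOn (fderivWithin ℝ (fun p : ℝ × E => v p.1 p.2) Q) Q :=
    hG.continuousOn_fderivWithin hu le_rfl
  obtain ⟨M₁, hM₁⟩ := hcomp.exists_bound_of_continuousOn hc'
  obtain ⟨M₂, hM₂⟩ := hcomp.exists_bound_of_continuousOn (hG.continuousOn)
  have lip : LipschitzOnWith M₁.toNNReal (fun p : ℝ × E => v p.1 p.2) Q := by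
    refine hconv.lipschitzOnWith_of_nnnorm_hasFDerivWithin_le
      (f' := fun p => fderivWithin ℝ (fun p : ℝ × E => v p.1 p.2) Q p)
      (fun p hp => (hd p hp).hasFDerivWithinAt) (fun p hp => ?_)
    rw [← norm_toNNReal]
    exact Real.toNNReal_mono (hM₁ p hp)
  refine ⟨M₁.toNNReal, max M₂ 0, le_max_right _ _, ?_, ?_⟩
  · intro t ht y hy
    exact le_trans (hM₂ (t, y) ⟨⟨ht.1, le_trans ht.2 (by simp [hT'def]; linarith [le_max_left T 0])⟩,
      by rw [mem_closedBall_zero_iff] at hy ⊢; exact le_trans hy (by simp [hR'def]; linarith [le_max_left R 0])⟩) (le_max_left _ _)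
  · intro t ht y hy y' hy'
    have h1 : ((t, y) : ℝ × E) ∈ Q := ⟨⟨ht.1, le_trans ht.2 (by simp [hT'def]; linarith [le_max_left T 0])⟩,
      by rw [mem_closedBall_zero_iff] at hy ⊢; exact le_trans hy (by simp [hR'def]; linarith [le_max_left R 0])⟩
    have h2 : ((t, y') : ℝ × E) ∈ Q := ⟨h1.1,
      by rw [mem_closedBall_zero_iff] at hy' ⊢; exact le_trans hy' (by simp [hR'def]; linarith [le_max_left R 0])⟩
    have := lip h1 h2
    simpa [Prod.edist_eq, edist_self] using this

theorem auxGlobal [FiniteDimensional ℝ E] (v : ℝ → E → E)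
    (hv : ContDiffOn ℝ 1 (fun p : ℝ × E => v p.1 p.2) (Ici 0 ×ˢ univ))
    (t₀ : ℝ) (ht₀ : 0 ≤ t₀) (x₀ : E) (W : ℝ → ℝ) (hW : Monotone W)
    (hapriori : ∀ b, t₀ ≤ b → ∀ x : ℝ → E, x t₀ = x₀ →
      (∀ t ∈ Icc t₀ b, HasDerivWithinAt x (v t (x t)) (Icc t₀ b) t) →
      ∀ t ∈ Icc t₀ b, ‖x t‖ ≤ W b) :
    ∃ x : ℝ → E, x t₀ = x₀ ∧ ∀ t, t₀ ≤ t → HasDerivWithinAt x (v t (x t)) (Ici t₀) t := by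
  have hGc : ContinuousOn (fun p : ℝ × E => v p.1 p.2) (Ici 0 ×ˢ univ) := hv.continuousOn
  -- Existence on arbitrary [t₀, T]
  have key : ∀ T, t₀ ≤ T → ∃ x : ℝ → E, x t₀ = x₀ ∧
      ∀ t ∈ Icc t₀ T, HasDerivWithinAt x (v t (x t)) (Icc t₀ T) t := by
    intro T hT
    set R : ℝ := W (T + 1) + 2 with hRdef
    obtain ⟨L, M, hM0, hMb, hLip⟩ := auxLip v hv (T + 1) R
    set δ : ℝ := (M + 1)⁻¹ with hδdef
    have hδpos : 0 < δ := by positivity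
    have hδ1 : δ ≤ 1 := by
      rw [hδdef]
      rw [inv_le_one_iff₀]
      right; linarith
    have hMδ : M * δ ≤ 1 := by
      rw [hδdef]
      rw [mul_inv_le_iff₀ (by linarith)]
      linarith
    have step : ∀ k : ℕ, ∃ x : ℝ → E, x t₀ = x₀ ∧
        ∀ t ∈ Icc t₀ (min (t₀ + k * δ) T),
          HasDerivWithinAt x (v t (x t)) (Icc t₀ (min (t₀ + k * δ) T)) t := by
      intro k
      induction k with
      | zero =>
        refine ⟨fun _ => x₀, rfl, ?_⟩
        have hmin : min (t₀ + (0:ℕ) * δ) T = t₀ := by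
          simp [min_eq_left hT]
        rw [hmin, Icc_self]
        intro t ht
        rw [mem_singleton_iff] at ht
        subst ht
        exact auxSingle _ _ _
      | succ k ih =>
        obtain ⟨x, hx0, hx⟩ := ih
        set b : ℝ := min (t₀ + k * δ) T with hbdef
        have htb : t₀ ≤ b := le_min (le_add_of_nonneg_right (by positivity)) hT
        have hbT : b ≤ T := min_le_right _ _
        have hb0 : 0 ≤ b := le_trans ht₀ htb
        by_cases hTb : T ≤ b
        · have hbeq : b = T := le_antisymm hbT hTb
          have hTk : T ≤ t₀ + k * δ := le_trans hTb (min_le_left _ _)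
          have hmin : min (t₀ + (k+1:ℕ) * δ) T = T := by
            apply min_eq_right
            push_cast
            nlinarith
          refine ⟨x, hx0, ?_⟩
          rw [hmin, ← hbeq]
          exact hx
        · push_neg at hTb
          have hbk : b = t₀ + k * δ := min_eq_left (by
            by_contra hcon
            push_neg at hcon
            have : b = T := min_eq_right hcon.le
            linarith)
          set b' : ℝ := min (t₀ + (k+1:ℕ) * δ) T with hb'def
          have hbb' : b ≤ b' := by
            apply le_min _ hbT
            rw [hbk]; push_cast; nlinarith
          have hb'bδ : b' ≤ b + δ := by
            refine le_trans (min_le_left _ _) ?_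
            rw [hbk]; push_cast; nlinarith
          -- a priori bound for x at b
          have hxb : ‖x b‖ ≤ W (T + 1) := by
            have := hapriori b htb x hx0 hx b ⟨htb, le_rfl⟩
            exact le_trans this (hW (by linarith))
          -- Picard-Lindelof on [b, b+δ]
          have hpl : IsPicardLindelof v (tmin := b) (tmax := b + δ) ⟨b, le_rfl, by linarith⟩
              (x b) 1 0 M.toNNReal L := by
            constructor
            · intro t ht
              refine (hLip t ⟨le_trans hb0 ht.1, by linarith [ht.2]⟩).mono ?_
              intro y hy
              rw [mem_closedBall_zero_iff]
              rw [mem_closedBall, NNReal.coe_one] at hy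
              have hns : ‖y‖ - ‖x b‖ ≤ ‖y - x b‖ := norm_sub_norm_le y (x b)
              rw [dist_eq_norm] at hy
              rw [hRdef]
              linarith
            · intro y hy
              have hcmp := ContinuousOn.comp (g := fun p : ℝ × E => v p.1 p.2)
                (f := fun t : ℝ => (t, y)) (s := Icc b (b+δ)) (t := Ici 0 ×ˢ univ) hGc
                ((continuous_id.prodMk continuous_const).continuousOn)
                (fun t ht => ⟨le_trans hb0 ht.1, trivial⟩)
              simpa [Function.comp_def] using hcmp
            · intro t ht y hy
              rw [Real.coe_toNNReal _ hM0]
              refine hMb t ⟨le_trans hb0 ht.1, by linarith [ht.2]⟩ y ?_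
              rw [mem_closedBall_zero_iff]
              rw [mem_closedBall, NNReal.coe_one] at hy
              have hns : ‖y‖ - ‖x b‖ ≤ ‖y - x b‖ := norm_sub_norm_le y (x b)
              rw [dist_eq_norm] at hy
              rw [hRdef]
              linarith
            · simp only [Real.coe_toNNReal _ hM0, NNReal.coe_one, NNReal.coe_zero, sub_zero,
                add_sub_cancel_left, sub_self]
              rw [max_eq_left hδpos.le]
              exact hMδ
          obtain ⟨y, hyb : y b = x b, hy⟩ := hpl.exists_eq_forall_mem_Icc_hasDerivWithinAt₀
          set z : ℝ → E := fun τ => if τ ≤ b then x τ else y τ with hzdef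
          have hz_eq_x : ∀ τ ∈ Icc t₀ b, z τ = x τ := fun τ hτ => if_pos hτ.2
          have hz_eq_y : ∀ τ ∈ Icc b (b + δ), z τ = y τ := by
            intro τ hτ
            rcases eq_or_lt_of_le hτ.1 with h | h
            · subst h
              simp only [hzdef, if_pos le_rfl, hyb]
            · exact if_neg (not_le.2 h)
          have claim : ∀ t ∈ Icc t₀ (b + δ), HasDerivWithinAt z (v t (z t)) (Icc t₀ (b + δ)) t := by
            intro t ht
            rcases lt_trichotomy t b with hlt | heq | hgt
            · have h1 : HasDerivWithinAt x (v t (x t)) (Icc t₀ b) t := hx t ⟨ht.1, hlt.le⟩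
              have h2 : HasDerivWithinAt z (v t (z t)) (Icc t₀ b) t := by
                rw [hz_eq_x t ⟨ht.1, hlt.le⟩]
                exact h1.congr hz_eq_x (hz_eq_x t ⟨ht.1, hlt.le⟩)
              refine h2.mono_of_mem_nhdsWithin ?_
              refine Filter.mem_of_superset (Filter.inter_mem self_mem_nhdsWithin
                (mem_nhdsWithin_of_mem_nhds (Iic_mem_nhds hlt))) ?_
              rintro w ⟨hw1, hw2⟩
              exact ⟨hw1.1, hw2⟩
            · subst heq
              have hzt : z b = x b := hz_eq_x b ⟨htb, le_rfl⟩
              have hdx : HasDerivWithinAt z (v b (z b)) (Icc t₀ b) b := by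
                rw [hzt]
                exact (hx b ⟨htb, le_rfl⟩).congr hz_eq_x hzt
              have hdy : HasDerivWithinAt z (v b (z b)) (Icc b (b + δ)) b := by
                have h3 : v b (z b) = v b (y b) := by
                  rw [hzt, hyb]
                rw [h3]
                exact (hy b ⟨le_rfl, by linarith⟩).congr hz_eq_y
                  (hz_eq_y b ⟨le_rfl, by linarith⟩)
              have hun := hdx.union hdy
              rwa [Icc_union_Icc_eq_Icc htb (by linarith)] at hun
            · have h1 : HasDerivWithinAt y (v t (y t)) (Icc b (b + δ)) t :=
                hy t ⟨hgt.le, ht.2⟩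
              have h2 : HasDerivWithinAt z (v t (z t)) (Ioc b (b + δ)) t := by
                rw [hz_eq_y t ⟨hgt.le, ht.2⟩]
                exact (h1.mono Ioc_subset_Icc_self).congr
                  (fun τ hτ => hz_eq_y τ (Ioc_subset_Icc_self hτ))
                  (hz_eq_y t ⟨hgt.le, ht.2⟩)
              refine h2.mono_of_mem_nhdsWithin ?_
              refine Filter.mem_of_superset (Filter.inter_mem self_mem_nhdsWithin
                (mem_nhdsWithin_of_mem_nhds (Ioi_mem_nhds hgt))) ?_
              rintro w ⟨hw1, hw2⟩
              exact ⟨hw2, hw1.2⟩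
          refine ⟨z, ?_, ?_⟩
          · rw [hz_eq_x t₀ ⟨le_rfl, htb⟩]; exact hx0
          · intro t ht
            have hb'le : b' ≤ b + δ := hb'bδ
            exact (claim t ⟨ht.1, le_trans ht.2 hb'le⟩).mono (Icc_subset_Icc_right hb'le)
    -- pick k large
    obtain ⟨k, hk⟩ := exists_nat_ge ((T - t₀) / δ)
    have hTk : T ≤ t₀ + k * δ := by
      rw [div_le_iff₀ hδpos] at hk
      linarith
    obtain ⟨x, hx0, hx⟩ := step k
    rw [min_eq_right hTk] at hx
    exact ⟨x, hx0, hx⟩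
  -- uniqueness
  have uniq : ∀ c, t₀ ≤ c → ∀ x y : ℝ → E, x t₀ = x₀ → y t₀ = x₀ →
      (∀ t ∈ Icc t₀ c, HasDerivWithinAt x (v t (x t)) (Icc t₀ c) t) →
      (∀ t ∈ Icc t₀ c, HasDerivWithinAt y (v t (y t)) (Icc t₀ c) t) →
      EqOn x y (Icc t₀ c) := by
    intro c hc x y hx0 hy0 hx hy
    obtain ⟨L, M, hM0, hMb, hLip⟩ := auxLip v hv c (W c)
    refine ODE_solution_unique_of_mem_Icc_right (v := v)
      (s := fun t => if t ∈ Icc (0:ℝ) c then closedBall (0:E) (W c) else (∅ : Set E))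
      (K := L) ?_ (fun τ hτ => (hx τ hτ).continuousWithinAt) ?_ ?_
      (fun τ hτ => (hy τ hτ).continuousWithinAt) ?_ ?_ (hx0.trans hy0.symm)
    · intro t _
      by_cases h : t ∈ Icc (0:ℝ) c
      · rw [if_pos h]; exact hLip t h
      · rw [if_neg h]; exact lipschitzOnWith_empty _ _
    · intro τ hτ
      exact auxIci' hτ.1 hτ.2 (hx τ (Ico_subset_Icc_self hτ))
    · intro τ hτ
      rw [if_pos (show τ ∈ Icc (0:ℝ) c from ⟨le_trans ht₀ hτ.1, hτ.2.le⟩), mem_closedBall_zero_iff]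
      exact hapriori c hc x hx0 hx τ (Ico_subset_Icc_self hτ)
    · intro τ hτ
      exact auxIci' hτ.1 hτ.2 (hy τ (Ico_subset_Icc_self hτ))
    · intro τ hτ
      rw [if_pos (show τ ∈ Icc (0:ℝ) c from ⟨le_trans ht₀ hτ.1, hτ.2.le⟩), mem_closedBall_zero_iff]
      exact hapriori c hc y hy0 hy τ (Ico_subset_Icc_self hτ)
  -- glue
  choose sol hsol0 hsol using fun n : ℕ => key (t₀ + n) (le_add_of_nonneg_right (Nat.cast_nonneg n))
  set xg : ℝ → E := fun t => sol (⌈t - t₀⌉₊ + 1) t with hxgdef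
  have hag : ∀ n : ℕ, ∀ t ∈ Icc t₀ (t₀ + n), xg t = sol n t := by
    intro n t ht
    set m : ℕ := ⌈t - t₀⌉₊ + 1 with hmdef
    have h1 : t ≤ t₀ + m := by
      have := Nat.le_ceil (t - t₀)
      push_cast [hmdef]
      push_cast at this
      linarith
    set c : ℝ := min (t₀ + m) (t₀ + n) with hcdef
    have hc : t₀ ≤ c := le_min (le_add_of_nonneg_right (Nat.cast_nonneg m))
      (le_add_of_nonneg_right (Nat.cast_nonneg n))
    have htc : t ∈ Icc t₀ c := ⟨ht.1, le_min h1 ht.2⟩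
    have := uniq c hc (sol m) (sol n) (hsol0 m) (hsol0 n)
      (fun τ hτ => (hsol m τ ⟨hτ.1, le_trans hτ.2 (min_le_left _ _)⟩).mono
        (Icc_subset_Icc_right (min_le_left _ _)))
      (fun τ hτ => (hsol n τ ⟨hτ.1, le_trans hτ.2 (min_le_right _ _)⟩).mono
        (Icc_subset_Icc_right (min_le_right _ _)))
    exact this htc
  refine ⟨xg, ?_, ?_⟩
  · rw [hxgdef]
    exact hsol0 _
  · intro t ht
    set n : ℕ := ⌈t - t₀⌉₊ + 1 with hndef
    have hlt : t < t₀ + n := by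
      have := Nat.le_ceil (t - t₀)
      push_cast [hndef]
      push_cast at this
      linarith [Nat.lt_succ_self ⌈t - t₀⌉₊]
    have hmem : t ∈ Icc t₀ (t₀ + n) := ⟨ht, hlt.le⟩
    have h1 : HasDerivWithinAt (sol n) (v t (sol n t)) (Icc t₀ (t₀ + n)) t := hsol n t hmem
    have h2 : HasDerivWithinAt xg (v t (xg t)) (Icc t₀ (t₀ + n)) t := by
      rw [hag n t hmem]
      exact h1.congr (fun τ hτ => hag n τ hτ) (hag n t hmem)
    refine h2.mono_of_mem_nhdsWithin ?_
    refine Filter.mem_of_superset (Filter.inter_mem self_mem_nhdsWithin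
      (mem_nhdsWithin_of_mem_nhds (Iic_mem_nhds hlt))) ?_
    rintro w ⟨hw1, hw2⟩
    exact ⟨hw1, hw2⟩

end auxiliary

noncomputable def auxP (C : ℝ → ℝ) (t : ℝ) : ℝ := Real.exp ((2 * C (max t 0) + 1) * max t 0)
noncomputable def auxB3 (C : ℝ → ℝ) (t s : ℝ) : ℝ := (max s 0) ^ 2 * auxP C t
noncomputable def auxB2 (C : ℝ → ℝ) (t s : ℝ) : ℝ :=
  ((max s 0) ^ 2 + (auxB3 C t s) ^ 3 * max t 0) * auxP C t
noncomputable def auxB1 (C : ℝ → ℝ) (t s : ℝ) : ℝ :=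
  ((max s 0) ^ 2 + (auxB2 C t s) ^ 3 * max t 0) * auxP C t
noncomputable def auxBeta (C : ℝ → ℝ) (t s : ℝ) : ℝ :=
  Real.sqrt (auxB1 C t s + auxB2 C t s + auxB3 C t s)

section props
variable {C : ℝ → ℝ} (hCm : MonotoneOn C (Set.Ici 0)) (hC0 : ∀ t, 0 ≤ t → 0 ≤ C t)

lemma auxP_pos (t : ℝ) : 0 < auxP C t := Real.exp_pos _

include hCm hC0 in
lemma auxP_mono {t₁ t₂ : ℝ} (h : t₁ ≤ t₂) : auxP C t₁ ≤ auxP C t₂ := by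
  have h0 : max t₁ 0 ≤ max t₂ 0 := max_le_max h le_rfl
  have m1 : (0:ℝ) ≤ max t₁ 0 := le_max_right _ _
  have m2 : (0:ℝ) ≤ max t₂ 0 := le_max_right _ _
  have hc : C (max t₁ 0) ≤ C (max t₂ 0) := hCm m1 m2 h0
  have hc1 : 0 ≤ C (max t₁ 0) := hC0 _ m1
  exact Real.exp_le_exp.2 (by nlinarith)

lemma auxB3_nonneg (t s : ℝ) : 0 ≤ auxB3 C t s :=
  mul_nonneg (pow_nonneg (le_max_right _ _) 2) (auxP_pos t).le

lemma auxB2_nonneg (t s : ℝ) : 0 ≤ auxB2 C t s :=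
  mul_nonneg (add_nonneg (pow_nonneg (le_max_right _ _) 2)
    (mul_nonneg (pow_nonneg (auxB3_nonneg _ _) 3) (le_max_right _ _))) (auxP_pos t).le

lemma auxB1_nonneg (t s : ℝ) : 0 ≤ auxB1 C t s :=
  mul_nonneg (add_nonneg (pow_nonneg (le_max_right _ _) 2)
    (mul_nonneg (pow_nonneg (auxB2_nonneg _ _) 3) (le_max_right _ _))) (auxP_pos t).le

include hCm hC0 in
lemma auxB3_mono {t₁ t₂ s₁ s₂ : ℝ} (ht : t₁ ≤ t₂) (hs : s₁ ≤ s₂) :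
    auxB3 C t₁ s₁ ≤ auxB3 C t₂ s₂ := by
  have h1 : (max s₁ 0) ^ 2 ≤ (max s₂ 0) ^ 2 :=
    pow_le_pow_left₀ (le_max_right _ _) (max_le_max hs le_rfl) 2
  exact mul_le_mul h1 (auxP_mono hCm hC0 ht) (auxP_pos _).le
    (pow_nonneg (le_max_right _ _) 2)

include hCm hC0 in
lemma auxB2_mono {t₁ t₂ s₁ s₂ : ℝ} (ht : t₁ ≤ t₂) (hs : s₁ ≤ s₂) :
    auxB2 C t₁ s₁ ≤ auxB2 C t₂ s₂ := by
  have h1 : (max s₁ 0) ^ 2 ≤ (max s₂ 0) ^ 2 :=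
    pow_le_pow_left₀ (le_max_right _ _) (max_le_max hs le_rfl) 2
  have h2 : (auxB3 C t₁ s₁) ^ 3 * max t₁ 0 ≤ (auxB3 C t₂ s₂) ^ 3 * max t₂ 0 :=
    mul_le_mul (pow_le_pow_left₀ (auxB3_nonneg _ _) (auxB3_mono hCm hC0 ht hs) 3)
      (max_le_max ht le_rfl) (le_max_right _ _) (pow_nonneg (auxB3_nonneg _ _) 3)
  refine mul_le_mul (add_le_add h1 h2) (auxP_mono hCm hC0 ht) (auxP_pos _).le ?_
  exact add_nonneg (pow_nonneg (le_max_right _ _) 2)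
    (mul_nonneg (pow_nonneg (auxB3_nonneg _ _) 3) (le_max_right _ _))

include hCm hC0 in
lemma auxB1_mono {t₁ t₂ s₁ s₂ : ℝ} (ht : t₁ ≤ t₂) (hs : s₁ ≤ s₂) :
    auxB1 C t₁ s₁ ≤ auxB1 C t₂ s₂ := by
  have h1 : (max s₁ 0) ^ 2 ≤ (max s₂ 0) ^ 2 :=
    pow_le_pow_left₀ (le_max_right _ _) (max_le_max hs le_rfl) 2
  have h2 : (auxB2 C t₁ s₁) ^ 3 * max t₁ 0 ≤ (auxB2 C t₂ s₂) ^ 3 * max t₂ 0 :=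
    mul_le_mul (pow_le_pow_left₀ (auxB2_nonneg _ _) (auxB2_mono hCm hC0 ht hs) 3)
      (max_le_max ht le_rfl) (le_max_right _ _) (pow_nonneg (auxB2_nonneg _ _) 3)
  refine mul_le_mul (add_le_add h1 h2) (auxP_mono hCm hC0 ht) (auxP_pos _).le ?_
  exact add_nonneg (pow_nonneg (le_max_right _ _) 2)
    (mul_nonneg (pow_nonneg (auxB2_nonneg _ _) 3) (le_max_right _ _))

include hCm hC0 in
lemma auxBeta_mono {t₁ t₂ s₁ s₂ : ℝ} (ht : t₁ ≤ t₂) (hs : s₁ ≤ s₂) :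
    auxBeta C t₁ s₁ ≤ auxBeta C t₂ s₂ :=
  Real.sqrt_le_sqrt (add_le_add (add_le_add (auxB1_mono hCm hC0 ht hs)
    (auxB2_mono hCm hC0 ht hs)) (auxB3_mono hCm hC0 ht hs))

lemma auxBeta_nonneg (t s : ℝ) : 0 ≤ auxBeta C t s := Real.sqrt_nonneg _

lemma auxBeta_cont (hCc : ContinuousOn C (Set.Ici 0)) :
    Continuous fun p : ℝ × ℝ => auxBeta C p.1 p.2 := by
  have hCC : Continuous fun t : ℝ => C (max t 0) :=
    hCc.comp_continuous (continuous_id.max continuous_const)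
      (fun x => Set.mem_Ici.2 (le_max_right _ _))
  have h1 : Continuous fun t : ℝ => (2 * C (max t 0) + 1) * max t 0 :=
    ((continuous_const.mul hCC).add continuous_const).mul
      (continuous_id.max continuous_const)
  have hP : Continuous fun t : ℝ => auxP C t := Real.continuous_exp.comp h1
  have hP2 : Continuous fun p : ℝ × ℝ => auxP C p.1 := hP.comp continuous_fst
  have hs2 : Continuous fun p : ℝ × ℝ => (max p.2 0) ^ 2 :=
    (continuous_snd.max continuous_const).pow 2
  have ht2 : Continuous fun p : ℝ × ℝ => max p.1 0 := continuous_fst.max continuous_const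
  have hB3 : Continuous fun p : ℝ × ℝ => auxB3 C p.1 p.2 := hs2.mul hP2
  have hB2 : Continuous fun p : ℝ × ℝ => auxB2 C p.1 p.2 :=
    (hs2.add ((hB3.pow 3).mul ht2)).mul hP2
  have hB1 : Continuous fun p : ℝ × ℝ => auxB1 C p.1 p.2 :=
    (hs2.add ((hB2.pow 3).mul ht2)).mul hP2
  exact Real.continuous_sqrt.comp ((hB1.add hB2).add hB3)

end props

theorem auxApriori (f₁ : ℝ → ℝ → ℝ) (f₂ : ℝ → ℝ → ℝ → ℝ) (f₃ : ℝ → ℝ → ℝ → ℝ → ℝ)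
    (C : ℝ → ℝ) (hCm : MonotoneOn C (Set.Ici 0)) (hC0 : ∀ t, 0 ≤ t → 0 ≤ C t)
    (hb₁ : ∀ t x₁ : ℝ, 0 ≤ t → x₁ * f₁ t x₁ ≤ C t * |x₁| ^ 2)
    (hb₂ : ∀ t x₁ x₂ : ℝ, 0 ≤ t → x₂ * f₂ t x₁ x₂ ≤ C t * |x₂| ^ 2)
    (hb₃ : ∀ t x₁ x₂ x₃ : ℝ, 0 ≤ t → x₃ * f₃ t x₁ x₂ x₃ ≤ C t * |x₃| ^ 2)
    (t₀ b : ℝ) (ht₀ : 0 ≤ t₀) (x : ℝ → Fin 3 → ℝ)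
    (hx : ∀ t ∈ Icc t₀ b, HasDerivWithinAt x
      (![(x t 1) ^ 3 + f₁ t (x t 0),
         (1 + (x t 0) ^ 2)⁻¹ * (x t 2) ^ 3 + f₂ t (x t 0) (x t 1),
         f₃ t (x t 0) (x t 1) (x t 2)]) (Icc t₀ b) t) :
    ∀ t ∈ Icc t₀ b, eunorm (x t) ≤ auxBeta C t (eunorm (x t₀)) := by
  set s : ℝ := eunorm (x t₀) with hsdef
  have hs0 : 0 ≤ s := Real.sqrt_nonneg _
  have hmax : max s 0 = s := max_eq_left hs0
  have hsum0 : 0 ≤ ∑ j, (x t₀ j) ^ 2 := Finset.sum_nonneg fun j _ => sq_nonneg _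
  have hs2 : s ^ 2 = ∑ j, (x t₀ j) ^ 2 := Real.sq_sqrt hsum0
  have hδi : ∀ i, (x t₀ i) ^ 2 ≤ s ^ 2 := by
    intro i
    rw [hs2]
    exact Finset.single_le_sum (fun j _ => sq_nonneg (x t₀ j)) (Finset.mem_univ i)
  -- componentwise derivatives
  have hcomp : ∀ (i : Fin 3), ∀ t ∈ Icc t₀ b, HasDerivWithinAt (fun τ => x τ i)
      ((![(x t 1) ^ 3 + f₁ t (x t 0),
         (1 + (x t 0) ^ 2)⁻¹ * (x t 2) ^ 3 + f₂ t (x t 0) (x t 1),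
         f₃ t (x t 0) (x t 1) (x t 2)] : Fin 3 → ℝ) i) (Icc t₀ b) t := by
    intro i t ht
    exact (ContinuousLinearMap.proj (R := ℝ) (φ := fun _ : Fin 3 => ℝ)
      i).hasFDerivAt.comp_hasDerivWithinAt t (hx t ht)
  have h0d : ∀ t ∈ Icc t₀ b, HasDerivWithinAt (fun τ => x τ 0)
      ((x t 1) ^ 3 + f₁ t (x t 0)) (Icc t₀ b) t := by
    intro t ht; simpa using hcomp 0 t ht
  have h1d : ∀ t ∈ Icc t₀ b, HasDerivWithinAt (fun τ => x τ 1)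
      ((1 + (x t 0) ^ 2)⁻¹ * (x t 2) ^ 3 + f₂ t (x t 0) (x t 1)) (Icc t₀ b) t := by
    intro t ht; simpa using hcomp 1 t ht
  have h2d : ∀ t ∈ Icc t₀ b, HasDerivWithinAt (fun τ => x τ 2)
      (f₃ t (x t 0) (x t 1) (x t 2)) (Icc t₀ b) t := by
    intro t ht; simpa using hcomp 2 t ht
  -- squares
  have hsq0 : ∀ t ∈ Icc t₀ b, HasDerivWithinAt (fun τ => (x τ 0) ^ 2)
      (2 * x t 0 * ((x t 1) ^ 3 + f₁ t (x t 0))) (Icc t₀ b) t := by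
    intro t ht
    have := (h0d t ht).fun_pow 2
    refine this.congr_deriv ?_
    push_cast
    ring
  have hsq1 : ∀ t ∈ Icc t₀ b, HasDerivWithinAt (fun τ => (x τ 1) ^ 2)
      (2 * x t 1 * ((1 + (x t 0) ^ 2)⁻¹ * (x t 2) ^ 3 + f₂ t (x t 0) (x t 1))) (Icc t₀ b) t := by
    intro t ht
    have := (h1d t ht).fun_pow 2
    refine this.congr_deriv ?_
    push_cast
    ring
  have hsq2 : ∀ t ∈ Icc t₀ b, HasDerivWithinAt (fun τ => (x τ 2) ^ 2)
      (2 * x t 2 * f₃ t (x t 0) (x t 1) (x t 2)) (Icc t₀ b) t := by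
    intro t ht
    have := (h2d t ht).fun_pow 2
    refine this.congr_deriv ?_
    push_cast
    ring
  -- step 3
  have hB3 : ∀ t ∈ Icc t₀ b, (x t 2) ^ 2 ≤ auxB3 C t s := by
    intro t ht
    have h0t : 0 ≤ t := le_trans ht₀ ht.1
    have htmax : max t 0 = t := max_eq_left h0t
    have hK : 0 < 2 * C t + 1 := by have := hC0 t h0t; linarith
    have key := auxGron ht₀ ht.1 (fun τ => (x τ 2) ^ 2)
      (fun τ => 2 * x τ 2 * f₃ τ (x τ 0) (x τ 1) (x τ 2))
      (K := 2 * C t + 1) (ε := 0) (δ := s ^ 2) hK (sq_nonneg s) le_rfl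
      (fun τ hτ => (hsq2 τ ⟨hτ.1, le_trans hτ.2 ht.2⟩).mono (Icc_subset_Icc_right ht.2))
      (hδi 2) ?_
    · rw [auxB3, auxP, hmax, htmax]
      calc (x t 2) ^ 2 ≤ (s ^ 2 + 0 * t) * Real.exp ((2 * C t + 1) * t) := key
        _ = s ^ 2 * Real.exp ((2 * C t + 1) * t) := by ring
    · intro τ hτ
      have h0τ : 0 ≤ τ := le_trans ht₀ hτ.1
      have hCτ : C τ ≤ C t := hCm h0τ h0t hτ.2.le
      have hCτ0 : 0 ≤ C τ := hC0 τ h0τ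
      have hb := hb₃ τ (x τ 0) (x τ 1) (x τ 2) h0τ
      rw [sq_abs] at hb
      nlinarith [sq_nonneg (x τ 2)]
  -- step 2
  have hB2 : ∀ t ∈ Icc t₀ b, (x t 1) ^ 2 ≤ auxB2 C t s := by
    intro t ht
    have h0t : 0 ≤ t := le_trans ht₀ ht.1
    have htmax : max t 0 = t := max_eq_left h0t
    have hK : 0 < 2 * C t + 1 := by have := hC0 t h0t; linarith
    have key := auxGron ht₀ ht.1 (fun τ => (x τ 1) ^ 2)
      (fun τ => 2 * x τ 1 * ((1 + (x τ 0) ^ 2)⁻¹ * (x τ 2) ^ 3 + f₂ τ (x τ 0) (x τ 1)))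
      (K := 2 * C t + 1) (ε := (auxB3 C t s) ^ 3) (δ := s ^ 2) hK (sq_nonneg s)
      (pow_nonneg (auxB3_nonneg _ _) 3)
      (fun τ hτ => (hsq1 τ ⟨hτ.1, le_trans hτ.2 ht.2⟩).mono (Icc_subset_Icc_right ht.2))
      (hδi 1) ?_
    · rw [auxB2, hmax, htmax, auxP, htmax]
      exact key
    · intro τ hτ
      have h0τ : 0 ≤ τ := le_trans ht₀ hτ.1
      have hCτ : C τ ≤ C t := hCm h0τ h0t hτ.2.le
      have hCτ0 : 0 ≤ C τ := hC0 τ h0τ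
      have hb := hb₂ τ (x τ 0) (x τ 1) h0τ
      rw [sq_abs] at hb
      have hc2 : (x τ 2) ^ 2 ≤ auxB3 C t s :=
        le_trans (hB3 τ ⟨hτ.1, le_trans hτ.2.le ht.2⟩) (auxB3_mono hCm hC0 hτ.2.le le_rfl)
      have hc6 : (x τ 2) ^ 6 ≤ (auxB3 C t s) ^ 3 := by
        calc (x τ 2) ^ 6 = ((x τ 2) ^ 2) ^ 3 := by ring
          _ ≤ (auxB3 C t s) ^ 3 := pow_le_pow_left₀ (sq_nonneg _) hc2 3
      set a : ℝ := x τ 1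
      set c : ℝ := x τ 2
      set e : ℝ := x τ 0
      have hd0 : (0:ℝ) < (1 + e ^ 2)⁻¹ := by positivity
      have hd1 : (1 + e ^ 2)⁻¹ ≤ 1 := by
        rw [inv_le_one_iff₀]; right; nlinarith [sq_nonneg e]
      set d : ℝ := (1 + e ^ 2)⁻¹
      have e1 : 2 * a * (d * c ^ 3) ≤ a ^ 2 + c ^ 6 := by
        nlinarith [mul_nonneg hd0.le (sq_nonneg (a - c ^ 3)),
          mul_nonneg (by linarith : (0:ℝ) ≤ 1 - d)
            (by positivity : (0:ℝ) ≤ a ^ 2 + c ^ 6)]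
      nlinarith [sq_nonneg a]
  -- step 1
  have hB1 : ∀ t ∈ Icc t₀ b, (x t 0) ^ 2 ≤ auxB1 C t s := by
    intro t ht
    have h0t : 0 ≤ t := le_trans ht₀ ht.1
    have htmax : max t 0 = t := max_eq_left h0t
    have hK : 0 < 2 * C t + 1 := by have := hC0 t h0t; linarith
    have key := auxGron ht₀ ht.1 (fun τ => (x τ 0) ^ 2)
      (fun τ => 2 * x τ 0 * ((x τ 1) ^ 3 + f₁ τ (x τ 0)))
      (K := 2 * C t + 1) (ε := (auxB2 C t s) ^ 3) (δ := s ^ 2) hK (sq_nonneg s)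
      (pow_nonneg (auxB2_nonneg _ _) 3)
      (fun τ hτ => (hsq0 τ ⟨hτ.1, le_trans hτ.2 ht.2⟩).mono (Icc_subset_Icc_right ht.2))
      (hδi 0) ?_
    · rw [auxB1, hmax, htmax, auxP, htmax]
      exact key
    · intro τ hτ
      have h0τ : 0 ≤ τ := le_trans ht₀ hτ.1
      have hCτ : C τ ≤ C t := hCm h0τ h0t hτ.2.le
      have hCτ0 : 0 ≤ C τ := hC0 τ h0τ
      have hb := hb₁ τ (x τ 0) h0τ
      rw [sq_abs] at hb
      have hc2 : (x τ 1) ^ 2 ≤ auxB2 C t s :=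
        le_trans (hB2 τ ⟨hτ.1, le_trans hτ.2.le ht.2⟩) (auxB2_mono hCm hC0 hτ.2.le le_rfl)
      have hc6 : (x τ 1) ^ 6 ≤ (auxB2 C t s) ^ 3 := by
        calc (x τ 1) ^ 6 = ((x τ 1) ^ 2) ^ 3 := by ring
          _ ≤ (auxB2 C t s) ^ 3 := pow_le_pow_left₀ (sq_nonneg _) hc2 3
      set a : ℝ := x τ 0
      set c : ℝ := x τ 1
      have e1 : 2 * a * c ^ 3 ≤ a ^ 2 + c ^ 6 := by nlinarith [sq_nonneg (a - c ^ 3)]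
      nlinarith [sq_nonneg a]
  -- combine
  intro t ht
  rw [eunorm, auxBeta]
  apply Real.sqrt_le_sqrt
  rw [Fin.sum_univ_three]
  have := hB1 t ht
  have := hB2 t ht
  have := hB3 t ht
  linarith

lemma auxSmooth (f₁ : ℝ → ℝ → ℝ) (f₂ : ℝ → ℝ → ℝ → ℝ) (f₃ : ℝ → ℝ → ℝ → ℝ → ℝ)
    (hf₁ : ContDiffOn ℝ 1 (fun p : ℝ × ℝ => f₁ p.1 p.2) (Set.Ici 0 ×ˢ Set.univ))
    (hf₂ : ContDiffOn ℝ 1 (fun p : ℝ × ℝ × ℝ => f₂ p.1 p.2.1 p.2.2) (Set.Ici 0 ×ˢ Set.univ))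
    (hf₃ : ContDiffOn ℝ 1 (fun p : ℝ × ℝ × ℝ × ℝ => f₃ p.1 p.2.1 p.2.2.1 p.2.2.2)
      (Set.Ici 0 ×ˢ Set.univ)) :
    ContDiffOn ℝ 1 (fun p : ℝ × (Fin 3 → ℝ) =>
      (![p.2 1 ^ 3 + f₁ p.1 (p.2 0),
        (1 + p.2 0 ^ 2)⁻¹ * p.2 2 ^ 3 + f₂ p.1 (p.2 0) (p.2 1),
        f₃ p.1 (p.2 0) (p.2 1) (p.2 2)] : Fin 3 → ℝ)) (Set.Ici 0 ×ˢ Set.univ) := by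
  have peval : ∀ j : Fin 3, ContDiff ℝ 1 (fun p : ℝ × (Fin 3 → ℝ) => p.2 j) := fun j =>
    ((ContinuousLinearMap.proj (R := ℝ) (φ := fun _ : Fin 3 => ℝ) j).contDiff).comp contDiff_snd
  have hmaps : Set.MapsTo (fun p : ℝ × (Fin 3 → ℝ) => p.1)
      (Set.Ici 0 ×ˢ Set.univ) (Set.Ici (0:ℝ)) := fun p hp => hp.1
  have hc0 : ContDiffOn ℝ 1 (fun p : ℝ × (Fin 3 → ℝ) => f₁ p.1 (p.2 0))
      (Set.Ici 0 ×ˢ Set.univ) := by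
    have hinner : ContDiff ℝ 1 (fun p : ℝ × (Fin 3 → ℝ) => ((p.1, p.2 0) : ℝ × ℝ)) :=
      contDiff_fst.prodMk (peval 0)
    have hm : Set.MapsTo (fun p : ℝ × (Fin 3 → ℝ) => ((p.1, p.2 0) : ℝ × ℝ))
        (Set.Ici 0 ×ˢ Set.univ) (Set.Ici 0 ×ˢ Set.univ) := fun p hp => ⟨hp.1, trivial⟩
    have := hf₁.comp hinner.contDiffOn hm
    simpa [Function.comp_def] using this
  have hc1 : ContDiffOn ℝ 1 (fun p : ℝ × (Fin 3 → ℝ) => f₂ p.1 (p.2 0) (p.2 1))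
      (Set.Ici 0 ×ˢ Set.univ) := by
    have hinner : ContDiff ℝ 1 (fun p : ℝ × (Fin 3 → ℝ) => ((p.1, p.2 0, p.2 1) : ℝ × ℝ × ℝ)) :=
      contDiff_fst.prodMk ((peval 0).prodMk (peval 1))
    have hm : Set.MapsTo (fun p : ℝ × (Fin 3 → ℝ) => ((p.1, p.2 0, p.2 1) : ℝ × ℝ × ℝ))
        (Set.Ici 0 ×ˢ Set.univ) (Set.Ici 0 ×ˢ Set.univ) := fun p hp => ⟨hp.1, trivial⟩
    have := hf₂.comp hinner.contDiffOn hm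
    simpa [Function.comp_def] using this
  have hc2 : ContDiffOn ℝ 1 (fun p : ℝ × (Fin 3 → ℝ) => f₃ p.1 (p.2 0) (p.2 1) (p.2 2))
      (Set.Ici 0 ×ˢ Set.univ) := by
    have hinner : ContDiff ℝ 1
        (fun p : ℝ × (Fin 3 → ℝ) => ((p.1, p.2 0, p.2 1, p.2 2) : ℝ × ℝ × ℝ × ℝ)) :=
      contDiff_fst.prodMk ((peval 0).prodMk ((peval 1).prodMk (peval 2)))
    have hm : Set.MapsTo (fun p : ℝ × (Fin 3 → ℝ) => ((p.1, p.2 0, p.2 1, p.2 2) : ℝ × ℝ × ℝ × ℝ))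
        (Set.Ici 0 ×ˢ Set.univ) (Set.Ici 0 ×ˢ Set.univ) := fun p hp => ⟨hp.1, trivial⟩
    have := hf₃.comp hinner.contDiffOn hm
    simpa [Function.comp_def] using this
  have hinv : ContDiff ℝ 1 (fun p : ℝ × (Fin 3 → ℝ) => (1 + p.2 0 ^ 2)⁻¹) := by
    refine ContDiff.inv (contDiff_const.add ((peval 0).pow 2)) ?_
    intro p
    positivity
  rw [contDiffOn_pi]
  intro i
  fin_cases i
  · simpa [Matrix.cons_val_zero] using (((peval 1).pow 3).contDiffOn).add hc0
  · simpa [Matrix.cons_val_one, Matrix.head_cons] using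
      ((hinv.mul ((peval 2).pow 3)).contDiffOn).add hc1
  · simpa using hc2

/-- **Example 1.1.** Under the stated sign conditions on `f₁, f₂, f₃`, the system
`ẋ₁ = x₂³ + f₁(t,x₁)`, `ẋ₂ = (1+x₁²)⁻¹x₃³ + f₂(t,x₁,x₂)`, `ẋ₃ = f₃(t,x₁,x₂,x₃)` on `ℝ³` is
forward complete, with a continuous estimate `β`, nondecreasing in each argument, such that
`|x(t,t₀,x₀)| ≤ β(t,|x₀|)` for all `t ≥ t₀ ≥ 0`. -/
theorem stmt19
    (f₁ : ℝ → ℝ → ℝ) (f₂ : ℝ → ℝ → ℝ → ℝ) (f₃ : ℝ → ℝ → ℝ → ℝ → ℝ)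
    (hf₁ : ContDiffOn ℝ 1 (fun p : ℝ × ℝ => f₁ p.1 p.2) (Set.Ici 0 ×ˢ Set.univ))
    (hf₂ : ContDiffOn ℝ 1 (fun p : ℝ × ℝ × ℝ => f₂ p.1 p.2.1 p.2.2) (Set.Ici 0 ×ˢ Set.univ))
    (hf₃ : ContDiffOn ℝ 1 (fun p : ℝ × ℝ × ℝ × ℝ => f₃ p.1 p.2.1 p.2.2.1 p.2.2.2)
      (Set.Ici 0 ×ˢ Set.univ))
    (C : ℝ → ℝ) (hCc : ContinuousOn C (Set.Ici 0)) (hCm : MonotoneOn C (Set.Ici 0))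
    (hC0 : ∀ t, 0 ≤ t → 0 ≤ C t)
    (hb₁ : ∀ t x₁ : ℝ, 0 ≤ t → x₁ * f₁ t x₁ ≤ C t * |x₁| ^ 2)
    (hb₂ : ∀ t x₁ x₂ : ℝ, 0 ≤ t → x₂ * f₂ t x₁ x₂ ≤ C t * |x₂| ^ 2)
    (hb₃ : ∀ t x₁ x₂ x₃ : ℝ, 0 ≤ t → x₃ * f₃ t x₁ x₂ x₃ ≤ C t * |x₃| ^ 2) :
    ∃ β : ℝ → ℝ → ℝ,
      (Continuous fun p : ℝ × ℝ => β p.1 p.2) ∧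
      (∀ t₁ t₂ s₁ s₂ : ℝ, t₁ ≤ t₂ → s₁ ≤ s₂ → β t₁ s₁ ≤ β t₂ s₂) ∧
      (∀ t s, 0 ≤ β t s) ∧
      ∀ t₀, 0 ≤ t₀ → ∀ x₀ : Fin 3 → ℝ,
        ∃ x : ℝ → Fin 3 → ℝ, x t₀ = x₀ ∧
          (∀ t, t₀ ≤ t → HasDerivWithinAt x
            (![(x t 1) ^ 3 + f₁ t (x t 0),
               (1 + (x t 0) ^ 2)⁻¹ * (x t 2) ^ 3 + f₂ t (x t 0) (x t 1),
               f₃ t (x t 0) (x t 1) (x t 2)])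
            (Set.Ici t₀) t) ∧
          (∀ t, t₀ ≤ t → eunorm (x t) ≤ β t (eunorm x₀)) := by
  have hG := auxSmooth f₁ f₂ f₃ hf₁ hf₂ hf₃
  refine ⟨auxBeta C, auxBeta_cont hCc,
    fun t₁ t₂ s₁ s₂ h1 h2 => auxBeta_mono hCm hC0 h1 h2,
    fun t s => auxBeta_nonneg t s, ?_⟩
  intro t₀ ht₀ x₀
  have heun : ∀ y : Fin 3 → ℝ, ‖y‖ ≤ eunorm y := by
    intro y
    rw [eunorm, pi_norm_le_iff_of_nonneg (Real.sqrt_nonneg _)]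
    intro i
    rw [Real.norm_eq_abs, ← Real.sqrt_sq_eq_abs]
    exact Real.sqrt_le_sqrt (Finset.single_le_sum (fun j _ => sq_nonneg (y j))
      (Finset.mem_univ i))
  have hap : ∀ b, t₀ ≤ b → ∀ x : ℝ → Fin 3 → ℝ, x t₀ = x₀ →
      (∀ t ∈ Icc t₀ b, HasDerivWithinAt x
        ((fun t (y : Fin 3 → ℝ) =>
          (![y 1 ^ 3 + f₁ t (y 0),
            (1 + y 0 ^ 2)⁻¹ * y 2 ^ 3 + f₂ t (y 0) (y 1),
            f₃ t (y 0) (y 1) (y 2)] : Fin 3 → ℝ)) t (x t)) (Icc t₀ b) t) →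
      ∀ t ∈ Icc t₀ b, ‖x t‖ ≤ auxBeta C b (eunorm x₀) := by
    intro b hb x hx0 hx t ht
    have h1 := auxApriori f₁ f₂ f₃ C hCm hC0 hb₁ hb₂ hb₃ t₀ b ht₀ x hx t ht
    have h2 : eunorm (x t) ≤ auxBeta C b (eunorm x₀) := by
      rw [← hx0]
      exact le_trans h1 (auxBeta_mono hCm hC0 ht.2 le_rfl)
    exact le_trans (heun (x t)) h2
  obtain ⟨x, hx0, hx⟩ := auxGlobal
    (fun t (y : Fin 3 → ℝ) =>
      (![y 1 ^ 3 + f₁ t (y 0),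
        (1 + y 0 ^ 2)⁻¹ * y 2 ^ 3 + f₂ t (y 0) (y 1),
        f₃ t (y 0) (y 1) (y 2)] : Fin 3 → ℝ))
    hG t₀ ht₀ x₀ (fun b => auxBeta C b (eunorm x₀))
    (fun b₁ b₂ h => auxBeta_mono hCm hC0 h le_rfl) hap
  refine ⟨x, hx0, fun t ht => hx t ht, ?_⟩
  intro t ht
  have hIcc : ∀ τ ∈ Icc t₀ t, HasDerivWithinAt x
      (![(x τ 1) ^ 3 + f₁ τ (x τ 0),
         (1 + (x τ 0) ^ 2)⁻¹ * (x τ 2) ^ 3 + f₂ τ (x τ 0) (x τ 1),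
         f₃ τ (x τ 0) (x τ 1) (x τ 2)]) (Icc t₀ t) τ :=
    fun τ hτ => (hx τ hτ.1).mono Icc_subset_Ici_self
  have h1 := auxApriori f₁ f₂ f₃ C hCm hC0 hb₁ hb₂ hb₃ t₀ t ht₀ x hIcc t ⟨ht, le_rfl⟩
  rwa [hx0] at h1
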